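/- For every real number x with 0 < x < 1, the infinite product ∏_{n=1}^∞ (1 - x^n)^{24} converges and equals exp(-24 · ∑_{m=1}^∞ (σ(m)/m)·x^m), where σ(m) denotes the sum of the positive divisors of m. -/

import Mathlib

/-- The sum of the positive divisors of `n`. -/
def sigma1 (n : ℕ) : ℕ := ∑ d ∈ n.divisors, d

/-!
Take logarithms. Since `-log (1 - y) = ∑_{k ≥ 1} y^k / k`, the series `-∑_n log (1 - x^n)` is
the absolutely convergent double series `∑_{a, b ≥ 1} x^(ab) / b`. Regrouping it along the
hyperbolas `ab = m` gives `∑_m x^m ∑_{b ∣ m} 1/b = ∑_m σ(m)/m · x^m`.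
-/

open Finset

lemma sum_divisors_inv_eq_sigma1_div {K : Type*} [Field K] [CharZero K] {n : ℕ} (hn : n ≠ 0) :
    ∑ d ∈ n.divisors, (d : K)⁻¹ = sigma1 n / n := by
  calc ∑ d ∈ n.divisors, (d : K)⁻¹ = ∑ d ∈ n.divisors, ((n / d : ℕ) : K) / n := by
        refine sum_congr rfl fun d hd => ?_
        have hd' : (d : K) ≠ 0 := Nat.cast_ne_zero.mpr (Nat.ne_of_gt (Nat.pos_of_mem_divisors hd))
        rw [Nat.cast_div (Nat.dvd_of_mem_divisors hd) hd']
        field_simp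
    _ = sigma1 n / n := by
        rw [← sum_div, sigma1, Nat.cast_sum, ← Nat.sum_div_divisors n (fun d => (d : K))]

lemma sum_divisorsAntidiagonal_pow_mul_div {K : Type*} [Field K] [CharZero K] (x : K) {n : ℕ}
    (hn : n ≠ 0) :
    ∑ p ∈ n.divisorsAntidiagonal, x ^ (p.1 * p.2) / p.2 = sigma1 n / n * x ^ n := by
  calc ∑ p ∈ n.divisorsAntidiagonal, x ^ (p.1 * p.2) / p.2
      = ∑ p ∈ n.divisorsAntidiagonal, x ^ n / p.2 :=
        sum_congr rfl fun p hp => by rw [(Nat.mem_divisorsAntidiagonal.mp hp).1]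
    _ = ∑ d ∈ n.divisors, x ^ n / d := Nat.sum_divisorsAntidiagonal' fun _ d => x ^ n / d
    _ = sigma1 n / n * x ^ n := by
        simp only [div_eq_mul_inv (x ^ n), ← mul_sum, sum_divisors_inv_eq_sigma1_div hn, mul_comm]

section

variable {x : ℝ}

lemma summable_pow_mul_div_pnat (hx : |x| < 1) :
    Summable fun p : ℕ+ × ℕ+ => x ^ (p.1 * p.2 : ℕ) / p.2 := by
  refine Summable.of_norm_bounded (summable_prod_mul_pow 0 (r := |x|) (by simpa using hx)) ?_
  intro p
  simp only [norm_div, norm_pow, Real.norm_eq_abs, pow_zero, one_mul]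
  exact div_le_self (by positivity) (by exact_mod_cast p.2.pos)

lemma hasSum_pow_mul_div_pnat (hx : |x| < 1) (a : ℕ+) :
    HasSum (fun b : ℕ+ => x ^ (a * b : ℕ) / b) (-Real.log (1 - x ^ (a : ℕ))) := by
  have hxa : |x ^ (a : ℕ)| < 1 := by
    rw [abs_pow]; exact pow_lt_one₀ (abs_nonneg x) hx a.ne_zero
  simp only [pow_mul]
  refine hasSum_pnat_iff_hasSum_succ (f := fun b : ℕ => (x ^ (a : ℕ)) ^ b / b) |>.mpr ?_
  simpa using Real.hasSum_pow_div_log_of_abs_lt_one hxa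

lemma hasSum_neg_log_one_sub_pow_pnat (hx : |x| < 1) :
    HasSum (fun a : ℕ+ => -Real.log (1 - x ^ (a : ℕ)))
      (∑' p : ℕ+ × ℕ+, x ^ (p.1 * p.2 : ℕ) / p.2) :=
  (summable_pow_mul_div_pnat hx).hasSum.prod_fiberwise (hasSum_pow_mul_div_pnat hx)

lemma hasSum_sigma1_div_mul_pow_pnat (hx : |x| < 1) :
    HasSum (fun n : ℕ+ => (sigma1 n : ℝ) / n * x ^ (n : ℕ))
      (∑' p : ℕ+ × ℕ+, x ^ (p.1 * p.2 : ℕ) / p.2) := by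
  refine (sigmaAntidiagonalEquivProd.hasSum_iff.mpr (summable_pow_mul_div_pnat hx).hasSum).sigma
    fun n => ?_
  rw [← sum_divisorsAntidiagonal_pow_mul_div x n.ne_zero, ← sum_attach]
  convert hasSum_fintype _ using 1
  exact sum_congr rfl fun p _ => by simp [sigmaAntidiagonalEquivProd, divisorsAntidiagonalFactors]

lemma hasSum_neg_log_one_sub_pow_succ (hx : |x| < 1) :
    HasSum (fun n : ℕ => -Real.log (1 - x ^ (n + 1)))
      (∑' m : ℕ, (sigma1 (m + 1) : ℝ) / (m + 1) * x ^ (m + 1)) := by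
  have h := hasSum_neg_log_one_sub_pow_pnat hx
  rw [← (hasSum_sigma1_div_mul_pow_pnat hx).tsum_eq,
    tsum_pnat_eq_tsum_succ (f := fun n : ℕ => (sigma1 n : ℝ) / n * x ^ n)] at h
  push_cast at h
  exact hasSum_pnat_iff_hasSum_succ (f := fun n : ℕ => -Real.log (1 - x ^ n)) |>.mp h

end

/-- For `0 < x < 1`, the infinite product `∏_{n=1}^∞ (1 - x^n)^24` converges and equals
`exp(-24 · ∑_{m=1}^∞ (σ(m)/m)·x^m)`. -/
theorem prod_one_sub_pow_24 (x : ℝ) (hx0 : 0 < x) (hx1 : x < 1) :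
    HasProd (fun n : ℕ => (1 - x ^ (n + 1)) ^ 24)
      (Real.exp (-24 * ∑' m : ℕ, (sigma1 (m + 1) : ℝ) / (m + 1) * x ^ (m + 1))) := by
  have hx : |x| < 1 := abs_lt.mpr ⟨by linarith, hx1⟩
  have hlog := (hasSum_neg_log_one_sub_pow_succ hx).mul_left (-24)
  simp only [neg_mul_neg] at hlog
  convert hlog.rexp using 1
  funext n
  have hpos : 0 < 1 - x ^ (n + 1) := sub_pos.mpr (pow_lt_one₀ hx0.le hx1 n.succ_ne_zero)
  rw [Function.comp_apply, ← Real.exp_log (pow_pos hpos 24), Real.log_pow]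
  norm_num
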